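/- arXiv:2102.13511 — 8 statements merged into one kernel-verified Lean document; each statement's English description precedes it below -/
import Mathlib

section
/- Let π be a group, γ, δ ∈ π, and S, T ⊆ π subsets. Then H_{γ,S} ∩ H_{δ,T} = H_{γ, S ∪ T ∪ {δ⁻¹γ}}. -/
/-- The diagonal homomorphism `π → π × π`. -/
def diagHom (π : Type*) [Group π] : π →* π × π :=
  MonoidHom.prod (MonoidHom.id π) (MonoidHom.id π)

/-- The subgroup `H_{γ,S} = (γ,e)·Δ(Z_π(S))·(γ⁻¹,e)` of `π × π`. -/
def Hsub {π : Type*} [Group π] (γ : π) (S : Set π) : Subgroup (π × π) :=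
  Subgroup.map (MulAut.conj ((γ, (1 : π)) : π × π)).toMonoidHom
    (Subgroup.map (diagHom π) (Subgroup.centralizer S))

theorem Subgroup.centralizer_union {G : Type*} [Group G] (S T : Set G) :
    centralizer (S ∪ T) = centralizer S ⊓ centralizer T :=
  SetLike.ext' Set.centralizer_union

theorem conj_eq_conj_iff_mul_comm {G : Type*} [Group G] (a b g : G) :
    a * g * a⁻¹ = b * g * b⁻¹ ↔ g * (b⁻¹ * a) = b⁻¹ * a * g := by
  rw [mul_inv_eq_iff_eq_mul, mul_assoc, mul_assoc, ← inv_mul_eq_iff_eq_mul, ← mul_assoc, eq_comm]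

theorem mem_Hsub_iff {π : Type*} [Group π] (γ : π) (S : Set π) (x y : π) :
    (x, y) ∈ Hsub γ S ↔ y ∈ Subgroup.centralizer S ∧ x = γ * y * γ⁻¹ := by
  constructor
  · rintro ⟨_, ⟨z, hz, rfl⟩, h⟩
    simp only [MulEquiv.coe_toMonoidHom, MulAut.conj_apply, diagHom, MonoidHom.prod_apply,
      MonoidHom.id_apply, Prod.ext_iff, Prod.fst_mul, Prod.snd_mul, Prod.fst_inv, Prod.snd_inv,
      one_mul, mul_one, inv_one] at h
    obtain ⟨hx, rfl⟩ := h
    exact ⟨hz, hx.symm⟩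
  · rintro ⟨hy, rfl⟩
    exact ⟨(y, y), ⟨y, hy, rfl⟩, by simp⟩

/-- `H_{γ,S} ∩ H_{δ,T} = H_{γ, S ∪ T ∪ {δ⁻¹γ}}`. -/
theorem Hsub_inter {π : Type*} [Group π] (γ δ : π) (S T : Set π) :
    Hsub γ S ⊓ Hsub δ T = Hsub γ (S ∪ T ∪ {δ⁻¹ * γ}) := by
  ext ⟨x, y⟩
  simp only [Subgroup.mem_inf, mem_Hsub_iff, Subgroup.centralizer_union,
    Subgroup.mem_centralizer_singleton_iff]
  constructor
  · rintro ⟨⟨hS, rfl⟩, hT, hconj⟩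
    exact ⟨⟨⟨hS, hT⟩, (conj_eq_conj_iff_mul_comm γ δ y).1 hconj⟩, rfl⟩
  · rintro ⟨⟨⟨hS, hT⟩, hcomm⟩, rfl⟩
    exact ⟨⟨hS, rfl⟩, hT, (conj_eq_conj_iff_mul_comm γ δ y).2 hcomm⟩
end

section
/- Let π be a group, γ ∈ π, and S ⊆ π a subset. Then the normalizer of H_{γ,S} in π × π is N_{π×π}(H_{γ,S}) = {(γkhγ⁻¹, h) ∈ π × π | h ∈ N_π(Z_π(S)), k ∈ Z_π(Z_π(S))}, where N_π(−) denotes the normalizer in π. -/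
namespace diagHom

variable {G : Type*} [Group G] {K : Subgroup G}

lemma mem_map_iff {x y : G} : (x, y) ∈ K.map (diagHom G) ↔ y ∈ K ∧ x = y := by
  constructor
  · rintro ⟨z, hz, hzxy⟩
    obtain ⟨rfl, rfl⟩ := Prod.mk.inj hzxy
    exact ⟨hz, rfl⟩
  · rintro ⟨hy, rfl⟩
    exact ⟨x, hy, rfl⟩

lemma map_map_snd : (K.map (diagHom G)).map (MonoidHom.snd G G) = K := by
  rw [Subgroup.map_map]
  exact Subgroup.map_id K

lemma mem_normalizer_map_iff {a b : G} :
    (a, b) ∈ Subgroup.normalizer (K.map (diagHom G) : Set (G × G)) ↔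
      b ∈ Subgroup.normalizer (K : Set G) ∧ a * b⁻¹ ∈ Subgroup.centralizer (K : Set G) := by
  constructor
  · intro hab
    have hb : b ∈ Subgroup.normalizer (K : Set G) := by
      rw [← map_map_snd (K := K)]
      exact Subgroup.le_normalizer_map _ ⟨(a, b), hab, rfl⟩
    refine ⟨hb, fun y hy => ?_⟩
    have hx : b⁻¹ * y * b ∈ K := (Subgroup.mem_normalizer_iff''.mp hb y).mp hy
    have hconj := (Subgroup.mem_normalizer_iff.mp hab (_, _)).mp (mem_map_iff.mpr ⟨hx, rfl⟩)
    have hay : a * (b⁻¹ * y * b) * a⁻¹ = y := by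
      simpa [mul_assoc] using (mem_map_iff.mp hconj).2
    conv_lhs => rw [← hay]
    group
  · rintro ⟨hb, hc⟩
    refine Subgroup.mem_normalizer_iff.mpr fun ⟨x, y⟩ => ?_
    have hconj : (a, b) * (x, y) * (a, b)⁻¹ = (a * x * a⁻¹, b * y * b⁻¹) := rfl
    rw [hconj, mem_map_iff, mem_map_iff, ← Subgroup.mem_normalizer_iff.mp hb]
    refine and_congr_right fun hy => ?_
    have hcomm := hc _ ((Subgroup.mem_normalizer_iff.mp hb y).mp hy)
    have hay : a * y * a⁻¹ = b * y * b⁻¹ :=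
      calc a * y * a⁻¹ = a * b⁻¹ * (b * y * b⁻¹) * (a * b⁻¹)⁻¹ := by group
        _ = b * y * b⁻¹ := by rw [← hcomm]; group
    rw [← hay]
    simp

end diagHom

/-- `N_{π×π}(H_{γ,S}) = {(γkhγ⁻¹, h) | h ∈ N_π(Z_π(S)), k ∈ Z_π(Z_π(S))}`. -/
theorem Hsub_normalizer {π : Type*} [Group π] (γ : π) (S : Set π) :
    (Subgroup.normalizer ((Hsub γ S : Subgroup (π × π)) : Set (π × π)) : Set (π × π)) =
      {p : π × π | ∃ h k : π, h ∈ Subgroup.normalizer ((Subgroup.centralizer S : Subgroup π) : Set π) ∧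
        k ∈ Subgroup.centralizer ((Subgroup.centralizer S : Subgroup π) : Set π) ∧
        p = (γ * k * h * γ⁻¹, h)} := by
  rw [Hsub, ← Subgroup.map_equiv_normalizer_eq]
  ext p
  simp only [SetLike.mem_coe, Subgroup.mem_map, Prod.exists, Set.mem_ofPred_eq,
    diagHom.mem_normalizer_map_iff]
  constructor
  · rintro ⟨a, h, ⟨hh, hk⟩, rfl⟩
    refine ⟨h, a * h⁻¹, hh, hk, ?_⟩
    simp [MulAut.conj_apply, mul_assoc]
  · rintro ⟨h, k, hh, hk, rfl⟩
    refine ⟨k * h, h, ⟨hh, by simpa using hk⟩, ?_⟩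
    simp [MulAut.conj_apply, mul_assoc]
end

section
/- Let π be a group and suppose the family F₁ is strictly contained in the family D. Then the maximal elements of D∖F₁ with respect to inclusion are precisely the subgroups H_{γ,e} = (γ,e)·Δ(π)·(γ⁻¹,e) for γ ∈ π. -/
/-- The family of subgroups of `G` generated by a set `H` of subgroups: all conjugates of
members of `H` together with all their subgroups. -/
def famGen {G : Type*} [Group G] (H : Set (Subgroup G)) : Set (Subgroup G) :=
  {K | ∃ M ∈ H, ∃ g : G, K ≤ Subgroup.map (MulAut.conj g).toMonoidHom M}

/-- The family `D = F⟨Δ(π)⟩` of subgroups of `π × π`. -/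
def famD (π : Type*) [Group π] : Set (Subgroup (π × π)) :=
  famGen {Subgroup.map (diagHom π) ⊤}

/-- The family `F₁ = F⟨{H_{γ,b} | γ ∈ π, b ∈ π∖{e}}⟩` of subgroups of `π × π`. -/
def famF1 (π : Type*) [Group π] : Set (Subgroup (π × π)) :=
  famGen {K | ∃ γ b : π, b ≠ 1 ∧ K = Hsub γ ({b} : Set π)}

/-! Conjugating `H_{δ,b}` by `(g₁,g₂)` gives `H_{g₁δg₂⁻¹, g₂bg₂⁻¹}`, so `D` consists of the
subgroups of the `H_{γ,e}` and `F₁` of the subgroups of the `H_{γ,b}` with `b ≠ e`. A nontrivial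
central `b` would give `H_{γ,b} = H_{γ,e}` and hence `D = F₁`; so `π` has trivial center, and then
`H_{γ,e}`, whose second projection is all of `π`, lies in no `H_{δ,b}` with `b ≠ e`. Finally
`H_{γ,e}` is the graph of conjugation by `γ`, and a graph of a function contained in another one
equals it. -/

namespace Hsub

variable {π : Type*} [Group π]

theorem mem_iff {γ : π} {S : Set π} {p : π × π} :
    p ∈ Hsub γ S ↔ p.2 ∈ Subgroup.centralizer S ∧ p.1 = γ * p.2 * γ⁻¹ := by
  rw [Hsub, Subgroup.mem_map_equiv, Subgroup.mem_map,
    ← (MulAut.conj γ⁻¹).injective.eq_iff (a := p.1)]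
  simp +contextual [diagHom, Prod.ext_iff, mul_assoc, eq_comm (b := p.2)]

theorem mem_one_iff {γ : π} {p : π × π} : p ∈ Hsub γ ({1} : Set π) ↔ p.1 = γ * p.2 * γ⁻¹ := by
  simp [mem_iff, Subgroup.mem_centralizer_singleton_iff]

theorem mk_conj_mem_one (γ x : π) : (γ * x * γ⁻¹, x) ∈ Hsub γ ({1} : Set π) :=
  mem_one_iff.2 rfl

theorem map_conj_singleton (g₁ g₂ δ b : π) :
    (Hsub δ {b}).map (MulAut.conj ((g₁, g₂) : π × π)).toMonoidHom =
      Hsub (g₁ * δ * g₂⁻¹) {g₂ * b * g₂⁻¹} := by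
  ext ⟨x, y⟩
  rw [Subgroup.mem_map_equiv, mem_iff, mem_iff]
  simp only [MulAut.conj_symm_apply, Subgroup.mem_centralizer_singleton_iff, Prod.fst_mul,
    Prod.snd_mul, Prod.fst_inv, Prod.snd_inv]
  rw [← (MulAut.conj g₂).injective.eq_iff (a := g₂⁻¹ * y * g₂ * b),
    ← (MulAut.conj g₁).injective.eq_iff (a := g₁⁻¹ * x * g₁)]
  simp [mul_assoc]

theorem singleton_eq_one_of_mem_center {b : π} (hb : b ∈ Subgroup.center π) (γ : π) :
    Hsub γ {b} = Hsub γ {1} := by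
  rw [Hsub, Hsub, Subgroup.centralizer_eq_top_iff_subset.2 (Set.singleton_subset_iff.2 hb),
    Subgroup.centralizer_eq_top_iff_subset.2 (Set.singleton_subset_iff.2 (Subgroup.one_mem _))]

theorem one_eq_of_le {γ δ : π} (h : Hsub γ ({1} : Set π) ≤ Hsub δ {1}) :
    Hsub γ ({1} : Set π) = Hsub δ {1} := by
  refine le_antisymm h fun p hp => mem_one_iff.2 ?_
  exact (mem_one_iff.1 hp).trans (mem_one_iff.1 (h (mk_conj_mem_one γ p.2))).symm

end Hsub

section Families

variable {π : Type*} [Group π]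

theorem mem_famD_iff {K : Subgroup (π × π)} :
    K ∈ famD π ↔ ∃ γ : π, K ≤ Hsub γ ({1} : Set π) := by
  have hΔ : Subgroup.map (diagHom π) ⊤ = Hsub 1 {1} := by
    ext p
    simp [Hsub.mem_one_iff, diagHom, Prod.ext_iff, eq_comm]
  constructor
  · rintro ⟨M, rfl, ⟨g₁, g₂⟩, hK⟩
    rw [hΔ, Hsub.map_conj_singleton] at hK
    exact ⟨g₁ * g₂⁻¹, by simpa using hK⟩
  · rintro ⟨γ, hK⟩
    refine ⟨_, rfl, ((γ, 1) : π × π), ?_⟩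
    rw [hΔ, Hsub.map_conj_singleton]
    simpa using hK

theorem Hsub.one_mem_famD (γ : π) : Hsub γ ({1} : Set π) ∈ famD π :=
  mem_famD_iff.2 ⟨γ, le_rfl⟩

theorem mem_famF1_iff {K : Subgroup (π × π)} :
    K ∈ famF1 π ↔ ∃ γ b : π, b ≠ 1 ∧ K ≤ Hsub γ ({b} : Set π) := by
  constructor
  · rintro ⟨M, ⟨δ, b, hb, rfl⟩, ⟨g₁, g₂⟩, hK⟩
    rw [Hsub.map_conj_singleton] at hK
    exact ⟨g₁ * δ * g₂⁻¹, g₂ * b * g₂⁻¹, by simpa using hb, hK⟩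
  · rintro ⟨γ, b, hb, hK⟩
    refine ⟨Hsub γ {b}, ⟨γ, b, hb, rfl⟩, ((1, 1) : π × π), ?_⟩
    rw [Hsub.map_conj_singleton]
    simpa using hK

theorem famD_subset_famF1_of_mem_center {b : π} (hb : b ∈ Subgroup.center π) (hb1 : b ≠ 1) :
    famD π ⊆ famF1 π := fun K hK => by
  obtain ⟨γ, hK⟩ := mem_famD_iff.1 hK
  exact mem_famF1_iff.2 ⟨γ, b, hb1, Hsub.singleton_eq_one_of_mem_center hb γ ▸ hK⟩

theorem center_eq_bot_of_famF1_ssubset_famD (hss : famF1 π ⊂ famD π) :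
    Subgroup.center π = ⊥ :=
  (Subgroup.eq_bot_iff_forall _).2 fun _ hb => by_contra fun hb1 =>
    hss.not_subset (famD_subset_famF1_of_mem_center hb hb1)

theorem Hsub.one_not_mem_famF1 (hZ : Subgroup.center π = ⊥) (γ : π) :
    Hsub γ ({1} : Set π) ∉ famF1 π := by
  intro h
  obtain ⟨δ, b, hb1, hle⟩ := mem_famF1_iff.1 h
  refine hb1 (Subgroup.mem_bot.1 (hZ ▸ Subgroup.mem_center_iff.2 fun g => ?_))
  exact Subgroup.mem_centralizer_singleton_iff.1 (Hsub.mem_iff.1 (hle (Hsub.mk_conj_mem_one γ g))).1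

end Families

/-- If `F₁ ⊊ D`, then the maximal elements of `D∖F₁` are precisely the subgroups
`H_{γ,e} = (γ,e)·Δ(π)·(γ⁻¹,e)` for `γ ∈ π`. -/
theorem maximal_elements_D_diff_F1 {π : Type*} [Group π] (hss : famF1 π ⊂ famD π) :
    ∀ K : Subgroup (π × π),
      (K ∈ famD π \ famF1 π ∧ ∀ L ∈ famD π \ famF1 π, K ≤ L → K = L) ↔
        ∃ γ : π, K = Hsub γ ({1} : Set π) := by
  have hmem (γ : π) : Hsub γ {1} ∈ famD π \ famF1 π :=
    ⟨Hsub.one_mem_famD γ, Hsub.one_not_mem_famF1 (center_eq_bot_of_famF1_ssubset_famD hss) γ⟩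
  intro K
  constructor
  · rintro ⟨⟨hKD, -⟩, hmax⟩
    obtain ⟨γ, hK⟩ := mem_famD_iff.1 hKD
    exact ⟨γ, hmax _ (hmem γ) hK⟩
  · rintro ⟨γ, rfl⟩
    refine ⟨hmem γ, fun L ⟨hLD, _⟩ hKL => ?_⟩
    obtain ⟨δ, hL⟩ := mem_famD_iff.1 hLD
    exact le_antisymm hKL (Hsub.one_eq_of_le (hKL.trans hL) ▸ hL)
end

section
/- Let π be a group whose center Z_π(π) is trivial. Then for every γ ∈ π the subgroup H_{γ,e} = (γ,e)·Δ(π)·(γ⁻¹,e) is self-normalizing in π × π, i.e. N_{π×π}(H_{γ,e}) = H_{γ,e}. In particular, condition (NM_{F₁⊆D}) holds for π × π. -/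
/-- Condition `(NM_{E⊆F})`: every maximal element of `F∖E` is self-normalizing. -/
def conditionNM {G : Type*} [Group G] (E F : Set (Subgroup G)) : Prop :=
  ∀ M ∈ F \ E, (∀ L ∈ F \ E, M ≤ L → M = L) → Subgroup.normalizer (M : Set G) = M

/-! If `(a, b)` normalizes the diagonal `Δ(π)`, then conjugation by `a` and by `b` agree, so
`b⁻¹ * a` is central and hence trivial: `Δ(π)` is self-normalizing, and so is each of its
conjugates, among them `H_{γ,e}`. Since `F₁` is closed under subgroups, a maximal member of
`D ∖ F₁` equals the conjugate of `Δ(π)` containing it. -/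

lemma mem_map_diagHom_top_iff {π : Type*} [Group π] {p : π × π} :
    p ∈ Subgroup.map (diagHom π) ⊤ ↔ p.1 = p.2 := by
  refine ⟨?_, fun h => ⟨p.2, trivial, Prod.ext h.symm rfl⟩⟩
  rintro ⟨x, -, rfl⟩
  rfl

lemma Hsub_one_eq_map_conj {π : Type*} [Group π] (γ : π) :
    Hsub γ ({1} : Set π) = Subgroup.map (MulAut.conj ((γ, (1 : π)) : π × π)).toMonoidHom
      (Subgroup.map (diagHom π) ⊤) := by
  rw [Hsub, Subgroup.centralizer_eq_top_iff_subset.mpr (by simp)]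

lemma normalizer_map_equiv_eq_self {G N : Type*} [Group G] [Group N] {H : Subgroup G}
    (hH : Subgroup.normalizer (H : Set G) = H) (f : G ≃* N) :
    Subgroup.normalizer (H.map f.toMonoidHom : Set N) = H.map f.toMonoidHom := by
  rw [← Subgroup.map_equiv_normalizer_eq, hH]

lemma normalizer_map_diagHom_top_of_center_eq_bot {π : Type*} [Group π]
    (hc : Subgroup.center π = ⊥) :
    Subgroup.normalizer (Subgroup.map (diagHom π) ⊤ : Set (π × π)) =
      Subgroup.map (diagHom π) ⊤ := by
  refine le_antisymm (fun p hp => ?_) Subgroup.le_normalizer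
  obtain ⟨a, b⟩ := p
  have hconj : ∀ x : π, a * x * a⁻¹ = b * x * b⁻¹ := fun x =>
    mem_map_diagHom_top_iff.mp ((hp (x, x)).mp (mem_map_diagHom_top_iff.mpr rfl))
  have hcentral : b⁻¹ * a ∈ Subgroup.center π := Subgroup.mem_center_iff.mpr fun x =>
    calc x * (b⁻¹ * a) = b⁻¹ * (b * x * b⁻¹) * a := by group
      _ = b⁻¹ * (a * x * a⁻¹) * a := by rw [hconj]
      _ = b⁻¹ * a * x := by group
  rw [hc, Subgroup.mem_bot, inv_mul_eq_one] at hcentral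
  exact mem_map_diagHom_top_iff.mpr hcentral.symm

lemma mem_famGen_of_le {G : Type*} [Group G] {H : Set (Subgroup G)} {K L : Subgroup G}
    (hKL : K ≤ L) (hL : L ∈ famGen H) : K ∈ famGen H :=
  let ⟨M, hM, g, hLM⟩ := hL
  ⟨M, hM, g, hKL.trans hLM⟩

/-- If the center of `π` is trivial, then every `H_{γ,e} = (γ,e)·Δ(π)·(γ⁻¹,e)` is
self-normalizing in `π × π`; in particular condition `(NM_{F₁⊆D})` holds for `π × π`. -/
theorem selfNormalizing_of_trivialCenter {π : Type*} [Group π]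
    (hc : Subgroup.center π = ⊥) :
    (∀ γ : π, Subgroup.normalizer (Hsub γ ({1} : Set π) : Set (π × π)) = Hsub γ ({1} : Set π)) ∧
      conditionNM (famF1 π) (famD π) := by
  have hconjDiag (g : π × π) := normalizer_map_equiv_eq_self
    (normalizer_map_diagHom_top_of_center_eq_bot hc) (MulAut.conj g)
  refine ⟨fun γ => Hsub_one_eq_map_conj γ ▸ hconjDiag _, ?_⟩
  rintro M ⟨⟨_, rfl, g, hle⟩, hMF1⟩ hmax
  rw [hmax _ ⟨⟨_, rfl, g, le_rfl⟩, fun hF1 => hMF1 (mem_famGen_of_le hle hF1)⟩ hle]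
  exact hconjDiag g
end

section
/- Let π be a group as in the Setup. Then for all b, c ∈ π∖{e}, either Z_π(b) = Z_π(c) or Z_π(b) ∩ Z_π(c) = {e}. -/
/-- A family `P` of subgroups of `π` is a malnormal collection if for all `i, j` and `g ∈ π`,
either `gP_ig⁻¹ ∩ P_j = {e}`, or `i = j` and `g ∈ P_i`. -/
def IsMalnormalCollection {π : Type*} [Group π] {I : Type*} (P : I → Subgroup π) : Prop :=
  ∀ i j : I, ∀ g : π,
    Subgroup.map (MulAut.conj g).toMonoidHom (P i) ⊓ P j = ⊥ ∨ (i = j ∧ g ∈ P i)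

/-- A monoid is torsion-free if no nontrivial element has finite order
(the definition of `Monoid.IsTorsionFree` in the older Mathlib). -/
def Monoid.IsTorsionFree (G : Type*) [Monoid G] : Prop :=
  ∀ g : G, g ≠ 1 → ¬IsOfFinOrder g

/-!
Every nontrivial `b` has an abelian centralizer: either `Z(b)` is cyclic, or `b` is conjugate
to a nontrivial `a ∈ P_i`, and malnormality forces `Z(a) ≤ P_i`, which is abelian. In a group
where all such centralizers are abelian, commuting is transitive on nontrivial elements, so a
nontrivial `x ∈ Z(b) ∩ Z(c)` gives `Z(b) = Z(x) = Z(c)`.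
-/

namespace Subgroup

variable {G : Type*} [Group G]

theorem centralizer_singleton_le_of_mem {b x : G} [IsMulCommutative (centralizer {b})]
    (hx : x ∈ centralizer {b}) : centralizer {b} ≤ centralizer {x} := fun _ hy ↦
  mem_centralizer_singleton_iff.mpr (setLike_mul_comm hy hx)

theorem mem_centralizer_singleton_comm {b x : G} :
    x ∈ centralizer {b} ↔ b ∈ centralizer {x} := by
  simp only [mem_centralizer_singleton_iff, eq_comm]

theorem centralizer_singleton_eq_of_mem {b x : G} [IsMulCommutative (centralizer {b})]
    [IsMulCommutative (centralizer {x})] (hx : x ∈ centralizer {b}) :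
    centralizer {b} = centralizer {x} :=
  le_antisymm (centralizer_singleton_le_of_mem hx)
    (centralizer_singleton_le_of_mem (mem_centralizer_singleton_comm.mp hx))

theorem centralizer_singleton_eq_or_inf_eq_bot
    (hcomm : ∀ b : G, b ≠ 1 → IsMulCommutative (centralizer {b})) {b c : G}
    (hb : b ≠ 1) (hc : c ≠ 1) :
    centralizer {b} = centralizer {c} ∨ centralizer {b} ⊓ centralizer {c} = ⊥ := by
  rcases (centralizer {b} ⊓ centralizer {c}).bot_or_exists_ne_one with hbot | ⟨x, ⟨hxb, hxc⟩, hx⟩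
  · exact .inr hbot
  · have := hcomm b hb
    have := hcomm c hc
    have := hcomm x hx
    exact .inl ((centralizer_singleton_eq_of_mem hxb).trans
      (centralizer_singleton_eq_of_mem hxc).symm)

theorem conj_mem_centralizer_conj_singleton {b x : G} (g : G) (hx : x ∈ centralizer {b}) :
    g * x * g⁻¹ ∈ centralizer {g * b * g⁻¹} := by
  rw [mem_centralizer_singleton_iff] at hx ⊢
  simp only [mul_assoc, inv_mul_cancel_left, ← mul_assoc x, hx]

end Subgroup

namespace IsMalnormalCollection

open Subgroup

variable {G : Type*} [Group G] {I : Type*} {P : I → Subgroup G}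

theorem centralizer_le (hmal : IsMalnormalCollection P) {i : I} {a : G} (ha : a ∈ P i)
    (ha1 : a ≠ 1) : centralizer {a} ≤ P i := by
  intro z hz
  refine ((hmal i i z).resolve_left fun hbot ↦ ha1 ?_).2
  have hfix : (MulAut.conj z).toMonoidHom a = a := by
    simp [mem_centralizer_singleton_iff.mp hz]
  have : a ∈ map (MulAut.conj z).toMonoidHom (P i) ⊓ P i := ⟨⟨a, ha, hfix⟩, ha⟩
  rwa [hbot, mem_bot] at this

theorem isMulCommutative_centralizer (hmal : IsMalnormalCollection P)
    (hab : ∀ i : I, IsMulCommutative (P i)) {i : I} {b g : G} (hb : b ≠ 1)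
    (hg : g * b * g⁻¹ ∈ P i) : IsMulCommutative (centralizer {b}) := by
  have hle : centralizer {b} ≤ (P i).comap (MulAut.conj g).toMonoidHom := fun _ hz ↦
    hmal.centralizer_le hg (by simpa using hb) (conj_mem_centralizer_conj_singleton g hz)
  have := hab i
  have := (P i).comap_injective_isMulCommutative (f := (MulAut.conj g).toMonoidHom)
    (MulAut.conj g).injective
  exact .of_setLike_mul_comm fun _ hx _ hy ↦ setLike_mul_comm (hle hx) (hle hy)

end IsMalnormalCollection

theorem centralizers_eq_or_disjoint_general {π : Type*} [Group π] {I : Type*} (P : I → Subgroup π)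
    (hmal : IsMalnormalCollection P)
    (hab : ∀ i : I, IsMulCommutative (P i))
    (hcyc : ∀ b : π, (¬ ∃ (i : I) (g : π), g * b * g⁻¹ ∈ P i) →
      IsCyclic (Subgroup.centralizer ({b} : Set π))) :
    ∀ b c : π, b ≠ 1 → c ≠ 1 →
      Subgroup.centralizer ({b} : Set π) = Subgroup.centralizer ({c} : Set π) ∨
      Subgroup.centralizer ({b} : Set π) ⊓ Subgroup.centralizer ({c} : Set π) = ⊥ := by
  refine fun b c hb hc ↦ Subgroup.centralizer_singleton_eq_or_inf_eq_bot (fun b hb ↦ ?_) hb hc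
  by_cases hconj : ∃ (i : I) (g : π), g * b * g⁻¹ ∈ P i
  · obtain ⟨i, g, hg⟩ := hconj
    exact hmal.isMulCommutative_centralizer hab hb hg
  · have := hcyc b hconj
    infer_instance

/-- For a group `π` as in the Setup (torsionfree, with a malnormal collection of abelian
subgroups `P_i` such that `Z_π(b)` is cyclic for every `b` not conjugate into any `P_i`):
for all `b, c ≠ e`, either `Z_π(b) = Z_π(c)` or `Z_π(b) ∩ Z_π(c) = {e}`. -/
theorem centralizers_eq_or_disjoint {π : Type*} [Group π] {I : Type*} (P : I → Subgroup π)
    (htf : Monoid.IsTorsionFree π)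
    (hmal : IsMalnormalCollection P)
    (hab : ∀ i : I, IsMulCommutative (P i))
    (hcyc : ∀ b : π, (¬ ∃ (i : I) (g : π), g * b * g⁻¹ ∈ P i) →
      IsCyclic (Subgroup.centralizer ({b} : Set π))) :
    ∀ b c : π, b ≠ 1 → c ≠ 1 →
      Subgroup.centralizer ({b} : Set π) = Subgroup.centralizer ({c} : Set π) ∨
      Subgroup.centralizer ({b} : Set π) ⊓ Subgroup.centralizer ({c} : Set π) = ⊥ :=
  centralizers_eq_or_disjoint_general P hmal hab hcyc
end

section
/- Let π be a group as in the Setup. Then for every b ∈ π∖{e}, the centralizer Z_π(b) is self-normalizing: N_π(Z_π(b)) = Z_π(b). -/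
open Subgroup

section Conjugation

variable {G : Type*} [Group G]

lemma centralizer_singleton_conj (g b : G) :
    centralizer {g * b * g⁻¹} = (centralizer {b}).map (MulAut.conj g).toMonoidHom := by
  ext x
  obtain ⟨y, rfl⟩ := (MulAut.conj g).surjective x
  rw [mem_map_equiv, MulEquiv.symm_apply_apply, ← MulAut.conj_apply, mem_centralizer_singleton_iff,
    mem_centralizer_singleton_iff, ← map_mul, ← map_mul, (MulAut.conj g).injective.eq_iff]

lemma normalizer_centralizer_eq_of_conj {g b : G}
    (h : normalizer (centralizer {g * b * g⁻¹} : Set G) = centralizer {g * b * g⁻¹}) :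
    normalizer (centralizer {b} : Set G) = centralizer {b} := by
  rw [centralizer_singleton_conj,
    ← map_normalizer_eq_of_bijective _ (MulAut.conj g).bijective] at h
  exact map_injective (MulAut.conj g).injective h

end Conjugation

namespace IsMalnormalCollection

variable {G I : Type*} [Group G] {P : I → Subgroup G} (hP : IsMalnormalCollection P)
  {i : I} {c : G}
include hP

lemma mem_of_conj_mem (hc : c ∈ P i) (hc1 : c ≠ 1) {g : G} (hg : g * c * g⁻¹ ∈ P i) :
    g ∈ P i := by
  rcases hP i i g with hbot | ⟨-, hg⟩
  · have : g * c * g⁻¹ ∈ map (MulAut.conj g).toMonoidHom (P i) ⊓ P i :=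
      ⟨mem_map.2 ⟨c, hc, rfl⟩, hg⟩
    rw [hbot, mem_bot, conj_eq_one_iff] at this
    exact absurd this hc1
  · exact hg

lemma normalizer_eq (hc : c ∈ P i) (hc1 : c ≠ 1) : normalizer (P i : Set G) = P i :=
  le_antisymm (fun _ hn ↦ hP.mem_of_conj_mem hc hc1 ((mem_normalizer_iff.1 hn c).1 hc))
    le_normalizer

lemma centralizer_eq [IsMulCommutative (P i)] (hc : c ∈ P i) (hc1 : c ≠ 1) :
    centralizer {c} = P i := by
  refine le_antisymm (fun g hg ↦ hP.mem_of_conj_mem hc hc1 ?_) fun g hg ↦ ?_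
  · rwa [mem_centralizer_singleton_iff.1 hg, mul_inv_cancel_right]
  · exact mem_centralizer_singleton_iff.2 (setLike_mul_comm hg hc)

lemma normalizer_centralizer_eq_of_conj_mem (hab : ∀ i, IsMulCommutative (P i)) {b g : G}
    (hb : b ≠ 1) (hg : g * b * g⁻¹ ∈ P i) :
    normalizer (centralizer {b} : Set G) = centralizer {b} := by
  have hne : g * b * g⁻¹ ≠ 1 := by rwa [Ne, conj_eq_one_iff]
  exact normalizer_centralizer_eq_of_conj <| by
    rw [hP.centralizer_eq hg hne, hP.normalizer_eq hg hne]

end IsMalnormalCollection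

section Cyclic

variable {G : Type*} [Group G] {x n : G}

lemma conj_eq_self_or_inv_of_mem_normalizer_zpowers (hx : ¬IsOfFinOrder x)
    (hn : n ∈ normalizer (zpowers x : Set G)) : n * x * n⁻¹ = x ∨ n * x * n⁻¹ = x⁻¹ := by
  obtain ⟨a, ha⟩ := mem_zpowers_iff.1 ((mem_normalizer_iff.1 hn x).1 (mem_zpowers x))
  obtain ⟨c, hc⟩ := mem_zpowers_iff.1 ((mem_normalizer_iff''.1 hn x).1 (mem_zpowers x))
  have hca : x ^ (c * a) = x ^ (1 : ℤ) :=
    calc x ^ (c * a) = (n⁻¹ * x * n⁻¹⁻¹) ^ a := by rw [zpow_mul, hc, inv_inv]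
      _ = x ^ (1 : ℤ) := by rw [conj_zpow, ha]; group
  have hac : a * c = 1 := by rw [mul_comm]; exact injective_zpow_iff_not_isOfFinOrder.2 hx hca
  rcases Int.eq_one_or_neg_one_of_mul_eq_one hac with rfl | rfl
  · exact .inl (by rw [← ha, zpow_one])
  · exact .inr (by rw [← ha, zpow_neg_one])

lemma commute_sq_of_conj_eq_inv (h : n * x * n⁻¹ = x⁻¹) : Commute (n ^ 2) x := by
  refine mul_inv_eq_iff_eq_mul.1 ?_
  calc n ^ 2 * x * (n ^ 2)⁻¹ = n * (n * x * n⁻¹) * n⁻¹ := by rw [sq]; group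
    _ = n * x⁻¹ * n⁻¹ := by rw [h]
    _ = (n * x * n⁻¹)⁻¹ := by group
    _ = x := by rw [h, inv_inv]

lemma sq_eq_one_of_conj_eq_inv (hx : ¬IsOfFinOrder x) (h : n * x * n⁻¹ = x⁻¹)
    (hn : n ^ 2 ∈ zpowers x) : n ^ 2 = 1 := by
  obtain ⟨m, hm⟩ := mem_zpowers_iff.1 hn
  have : x ^ m = x ^ (-m) :=
    calc x ^ m = n * x ^ m * n⁻¹ := by rw [hm]; group
      _ = x ^ (-m) := by rw [← conj_zpow, h, inv_zpow, zpow_neg]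
  have hm0 : m = 0 := by have := injective_zpow_iff_not_isOfFinOrder.2 hx this; omega
  rw [← hm, hm0, zpow_zero]

lemma normalizer_centralizer_eq_of_isCyclic (htf : ∀ g : G, g ≠ 1 → ¬IsOfFinOrder g) {b : G}
    (hb : b ≠ 1) (hZ : IsCyclic (centralizer {b})) :
    normalizer (centralizer {b} : Set G) = centralizer {b} := by
  obtain ⟨x, hx⟩ := (centralizer {b}).isCyclic_iff_exists_zpowers_eq_top.1 hZ
  have hbx : b ∈ zpowers x := hx ▸ mem_centralizer_singleton_iff.2 rfl
  have hx1 : x ≠ 1 := by rintro rfl; exact hb (by simpa using hbx)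
  have mem_of_commute : ∀ y, Commute y x → y ∈ centralizer {b} := by
    intro y hy
    obtain ⟨k, rfl⟩ := mem_zpowers_iff.1 hbx
    exact mem_centralizer_singleton_iff.2 (hy.zpow_right k).eq
  refine le_antisymm (fun n hn ↦ ?_) le_normalizer
  rw [← hx] at hn
  rcases conj_eq_self_or_inv_of_mem_normalizer_zpowers (htf x hx1) hn with h | h
  · exact mem_of_commute n (mul_inv_eq_iff_eq_mul.1 h)
  · have hn2 := sq_eq_one_of_conj_eq_inv (htf x hx1) h
      (hx ▸ mem_of_commute _ (commute_sq_of_conj_eq_inv h))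
    have hn1 : n = 1 := by
      by_contra hn1
      exact htf n hn1 (isOfFinOrder_iff_pow_eq_one.2 ⟨2, two_pos, hn2⟩)
    exact hn1 ▸ one_mem _

end Cyclic

/-- For a group `π` as in the Setup, every centralizer `Z_π(b)` of a nontrivial element `b`
is self-normalizing: `N_π(Z_π(b)) = Z_π(b)`. -/
theorem centralizer_selfNormalizing {π : Type*} [Group π] {I : Type*} (P : I → Subgroup π)
    (htf : ∀ g : π, g ≠ 1 → ¬IsOfFinOrder g)
    (hmal : IsMalnormalCollection P)
    (hab : ∀ i : I, IsMulCommutative (P i))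
    (hcyc : ∀ b : π, (¬ ∃ (i : I) (g : π), g * b * g⁻¹ ∈ P i) →
      IsCyclic (Subgroup.centralizer ({b} : Set π))) :
    ∀ b : π, b ≠ 1 →
      Subgroup.normalizer (Subgroup.centralizer ({b} : Set π) : Set π) = Subgroup.centralizer ({b} : Set π) := by
  intro b hb
  by_cases hconj : ∃ (i : I) (g : π), g * b * g⁻¹ ∈ P i
  · obtain ⟨i, g, hg⟩ := hconj
    exact hmal.normalizer_centralizer_eq_of_conj_mem hab hb hg
  · exact normalizer_centralizer_eq_of_isCyclic htf hb (hcyc b hconj)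
end

section
/- Let π be a group as in the Setup. Then for all γ, δ ∈ π and b, c ∈ π∖{e}, either H_{γ,b} = H_{δ,c} or H_{γ,b} ∩ H_{δ,c} = {(e,e)}. -/
/-!
The setup makes the centralizer `Z(b)` of every nontrivial `b` abelian: either `Z(b)` is cyclic,
or `b` is conjugate to a nontrivial `p ∈ P i` and malnormality forces `Z(p) = P i`. Then
commutation is transitive on nontrivial elements, so a nontrivial `z` commuting with `b` has
`Z(z) = Z(b)`. A nontrivial element `(γzγ⁻¹, z)` of `H_{γ,b} ∩ H_{δ,c}` therefore gives
`Z(b) = Z(z) = Z(c)`, and `δ⁻¹γ ∈ Z(z)` commutes with all of `Z(z)`, so conjugating `Z(z)` by `γ`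
or by `δ` gives the same result.
-/

section

open Subgroup

variable {π : Type*} [Group π]

lemma mem_Hsub {γ : π} {S : Set π} {p : π × π} :
    p ∈ Hsub γ S ↔ p.2 ∈ centralizer S ∧ p.1 = γ * p.2 * γ⁻¹ := by
  simp only [Hsub, mem_map, diagHom, MulEquiv.coe_toMonoidHom, MulAut.conj_apply,
    MonoidHom.prod_apply, MonoidHom.id_apply]
  constructor
  · rintro ⟨q, ⟨z, hz, rfl⟩, rfl⟩
    simp [hz]
  · rintro ⟨h2, h1⟩
    exact ⟨(p.2, p.2), ⟨p.2, h2, rfl⟩, by simp [Prod.ext_iff, h1]⟩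

lemma Hsub_congr_centralizer {γ : π} {S T : Set π} (h : centralizer S = centralizer T) :
    Hsub γ S = Hsub γ T := by
  rw [Hsub, Hsub, h]

lemma Hsub_eq_of_inv_mul_mem_centralizer {γ δ : π} {S : Set π}
    (h : δ⁻¹ * γ ∈ centralizer (centralizer S : Set π)) : Hsub γ S = Hsub δ S := by
  have hconj : ∀ w ∈ centralizer S, γ * w * γ⁻¹ = δ * w * δ⁻¹ := fun w hw => by
    have hcomm : w * (δ⁻¹ * γ) = δ⁻¹ * γ * w := h w hw
    calc γ * w * γ⁻¹ = δ * (δ⁻¹ * γ * w) * γ⁻¹ := by group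
      _ = δ * (w * (δ⁻¹ * γ)) * γ⁻¹ := by rw [hcomm]
      _ = δ * w * δ⁻¹ := by group
  ext q
  simp only [mem_Hsub]
  exact and_congr_right fun hq => by rw [hconj q.2 hq]

lemma Hsub_eq_of_conj_eq {γ δ z : π} [IsMulCommutative (centralizer {z})]
    (h : γ * z * γ⁻¹ = δ * z * δ⁻¹) : Hsub γ {z} = Hsub δ {z} := by
  refine Hsub_eq_of_inv_mul_mem_centralizer (le_centralizer _ ?_)
  rw [mem_centralizer_singleton_iff]
  calc δ⁻¹ * γ * z = δ⁻¹ * (γ * z * γ⁻¹) * γ := by group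
    _ = δ⁻¹ * (δ * z * δ⁻¹) * γ := by rw [h]
    _ = z * (δ⁻¹ * γ) := by group

lemma Commute.trans_of_isMulCommutative_centralizer {a b c : π}
    [IsMulCommutative (centralizer {b})] (hab : Commute a b) (hbc : Commute b c) :
    Commute a c :=
  setLike_mul_comm (mem_centralizer_singleton_iff.2 hab)
    (mem_centralizer_singleton_iff.2 hbc.symm)

lemma centralizer_singleton_eq_of_commute
    (hZ : ∀ b : π, b ≠ 1 → IsMulCommutative (centralizer {b}))
    {z b : π} (hz : z ≠ 1) (hb : b ≠ 1) (h : Commute z b) :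
    centralizer {z} = centralizer {b} := by
  have := hZ b hb
  have := hZ z hz
  ext x
  simp only [mem_centralizer_singleton_iff]
  exact ⟨fun hx => Commute.trans_of_isMulCommutative_centralizer (b := z) hx h,
    fun hx => Commute.trans_of_isMulCommutative_centralizer (b := b) hx h.symm⟩

theorem Hsub_eq_or_inf_eq_bot_of_isMulCommutative_centralizer
    (hZ : ∀ b : π, b ≠ 1 → IsMulCommutative (centralizer {b}))
    (γ δ : π) {b c : π} (hb : b ≠ 1) (hc : c ≠ 1) :
    Hsub γ {b} = Hsub δ {c} ∨ Hsub γ {b} ⊓ Hsub δ {c} = ⊥ := by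
  refine or_iff_not_imp_right.2 fun hne => ?_
  obtain ⟨⟨p, hp⟩, hp1⟩ := ne_bot_iff_exists_ne_one.1 hne
  rw [mem_inf, mem_Hsub, mem_Hsub] at hp
  obtain ⟨⟨hzb, hγ⟩, hzc, hδ⟩ := hp
  have hz : p.2 ≠ 1 := fun h => hp1 (Subtype.ext (Prod.ext (by simp [hγ, h]) h))
  have := hZ p.2 hz
  calc Hsub γ {b} = Hsub γ {p.2} := Hsub_congr_centralizer
        (centralizer_singleton_eq_of_commute hZ hz hb
          (mem_centralizer_singleton_iff.1 hzb)).symm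
    _ = Hsub δ {p.2} := Hsub_eq_of_conj_eq (hγ.symm.trans hδ)
    _ = Hsub δ {c} := Hsub_congr_centralizer
        (centralizer_singleton_eq_of_commute hZ hz hc
          (mem_centralizer_singleton_iff.1 hzc))

lemma IsMalnormalCollection.centralizer_eq_s13 {I : Type*} {P : I → Subgroup π}
    (hmal : IsMalnormalCollection P) {i : I} [IsMulCommutative (P i)] {p : π} (hp : p ∈ P i)
    (hp1 : p ≠ 1) : centralizer {p} = P i := by
  ext x
  rw [mem_centralizer_singleton_iff]
  refine ⟨fun hx => ?_, fun hx => setLike_mul_comm hx hp⟩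
  obtain hbot | ⟨-, hxi⟩ := hmal i i x
  · have hfix : MulAut.conj x p = p := by
      rw [MulAut.conj_apply, hx, mul_inv_cancel_right]
    have hmem : p ∈ (P i).map (MulAut.conj x).toMonoidHom ⊓ P i := ⟨⟨p, hp, hfix⟩, hp⟩
    rw [hbot, mem_bot] at hmem
    exact absurd hmem hp1
  · exact hxi

lemma isMulCommutative_centralizer_of_conj {g b : π}
    [IsMulCommutative (centralizer {g * b * g⁻¹})] : IsMulCommutative (centralizer {b}) := by
  have hconj : ∀ x ∈ centralizer {b}, MulAut.conj g x ∈ centralizer {g * b * g⁻¹} := fun x hx =>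
    mem_centralizer_singleton_iff.2 (by
      simpa only [MulAut.conj_apply] using
        (Commute.map (mem_centralizer_singleton_iff.1 hx) (MulAut.conj g)).eq)
  refine .of_setLike_mul_comm fun x hx y hy => (MulAut.conj g).injective ?_
  rw [map_mul, map_mul]
  exact setLike_mul_comm (hconj x hx) (hconj y hy)

theorem IsMalnormalCollection.isMulCommutative_centralizer_s13 {I : Type*} {P : I → Subgroup π}
    (hmal : IsMalnormalCollection P) (hab : ∀ i : I, IsMulCommutative (P i))
    (hcyc : ∀ b : π, (¬ ∃ (i : I) (g : π), g * b * g⁻¹ ∈ P i) →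
      IsCyclic (centralizer ({b} : Set π)))
    {b : π} (hb : b ≠ 1) : IsMulCommutative (centralizer {b}) := by
  by_cases hconj : ∃ (i : I) (g : π), g * b * g⁻¹ ∈ P i
  · obtain ⟨i, g, hg⟩ := hconj
    have hg1 : g * b * g⁻¹ ≠ 1 := by simpa [mul_inv_eq_one] using hb
    have : IsMulCommutative (centralizer {g * b * g⁻¹}) := by
      rw [hmal.centralizer_eq_s13 hg hg1]
      exact hab i
    exact isMulCommutative_centralizer_of_conj (g := g)
  · have := hcyc b hconj
    infer_instance

end

theorem Hsub_eq_or_disjoint_general {π : Type*} [Group π] {I : Type*} (P : I → Subgroup π)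
    (hmal : IsMalnormalCollection P)
    (hab : ∀ i : I, IsMulCommutative (P i))
    (hcyc : ∀ b : π, (¬ ∃ (i : I) (g : π), g * b * g⁻¹ ∈ P i) →
      IsCyclic (Subgroup.centralizer ({b} : Set π))) :
    ∀ γ δ b c : π, b ≠ 1 → c ≠ 1 →
      Hsub γ ({b} : Set π) = Hsub δ ({c} : Set π) ∨
      Hsub γ ({b} : Set π) ⊓ Hsub δ ({c} : Set π) = ⊥ :=
  fun γ δ _ _ hb hc => Hsub_eq_or_inf_eq_bot_of_isMulCommutative_centralizer
    (fun _ hb => hmal.isMulCommutative_centralizer_s13 hab hcyc hb) γ δ hb hc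

/-- For a group `π` as in the Setup, for all `γ, δ ∈ π` and `b, c ∈ π∖{e}`, either
`H_{γ,b} = H_{δ,c}` or `H_{γ,b} ∩ H_{δ,c} = {(e,e)}`. -/
theorem Hsub_eq_or_disjoint {π : Type*} [Group π] {I : Type*} (P : I → Subgroup π)
    (htf : ∀ g : π, g ≠ 1 → ¬IsOfFinOrder g)
    (hmal : IsMalnormalCollection P)
    (hab : ∀ i : I, IsMulCommutative (P i))
    (hcyc : ∀ b : π, (¬ ∃ (i : I) (g : π), g * b * g⁻¹ ∈ P i) →
      IsCyclic (Subgroup.centralizer ({b} : Set π))) :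
    ∀ γ δ b c : π, b ≠ 1 → c ≠ 1 →
      Hsub γ ({b} : Set π) = Hsub δ ({c} : Set π) ∨
      Hsub γ ({b} : Set π) ⊓ Hsub δ ({c} : Set π) = ⊥ :=
  Hsub_eq_or_disjoint_general P hmal hab hcyc
end

section
/- Let π be a group as in the Setup. If H is a nontrivial subgroup of π such that H ≤ Z_π(b) for some b ∈ π∖{e}, then there is exactly one subgroup of π of the form Z_π(c) with c ∈ π∖{e} that contains H. Consequently, conditions (M_{TR⊆F⟨Z⟩}) and (NM_{TR⊆F⟨Z⟩}) hold for π, where F⟨Z⟩ := F⟨{Z_π(b) | b ∈ π∖{e}}⟩. -/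
/-- Condition `(M_{E⊆F})`: every element of `F∖E` is contained in a unique element of `F∖E`
which is maximal in `F∖E` with respect to inclusion. -/
def conditionM {G : Type*} [Group G] (E F : Set (Subgroup G)) : Prop :=
  ∀ H ∈ F \ E, ∃! M : Subgroup G,
    M ∈ F \ E ∧ H ≤ M ∧ ∀ L ∈ F \ E, M ≤ L → M = L

open Subgroup

def IsCommTransitive (G : Type*) [Group G] : Prop :=
  ∀ a b c : G, b ≠ 1 → Commute a b → Commute b c → Commute a c

abbrev nontrivialCentralizers (G : Type*) [Group G] : Set (Subgroup G) :=
  {K | ∃ b : G, b ≠ 1 ∧ K = centralizer ({b} : Set G)}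

section Centralizers

variable {G : Type*} [Group G]

theorem map_conj_centralizer_singleton_le (g b : G) :
    (centralizer ({b} : Set G)).map (MulAut.conj g).toMonoidHom ≤
      centralizer ({g * b * g⁻¹} : Set G) := by
  simpa using map_centralizer_le_centralizer_image ({b} : Set G) (MulAut.conj g).toMonoidHom

theorem mem_famGen_nontrivialCentralizers {H : Subgroup G} :
    H ∈ famGen (nontrivialCentralizers G) ↔ ∃ c : G, c ≠ 1 ∧ H ≤ centralizer ({c} : Set G) := by
  constructor
  · rintro ⟨_, ⟨b, hb, rfl⟩, g, hH⟩
    refine ⟨g * b * g⁻¹, ?_, hH.trans (map_conj_centralizer_singleton_le g b)⟩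
    simpa using hb
  · rintro ⟨c, hc, hH⟩
    exact ⟨_, ⟨c, hc, rfl⟩, 1, fun x hx => ⟨x, hH hx, by simp⟩⟩

theorem centralizer_mem_famGen_diff_bot {h : G} (hh : h ≠ 1) :
    centralizer ({h} : Set G) ∈ famGen (nontrivialCentralizers G) \ {⊥} :=
  ⟨mem_famGen_nontrivialCentralizers.2 ⟨h, hh, le_rfl⟩,
    fun hbot => hh ((mem_bot.1 (hbot ▸ mem_centralizer_singleton_iff.2 rfl)))⟩

end Centralizers

theorem conj_eq_self_or_inv_of_mem_normalizer_centralizer {G : Type*} [Group G]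
    (htf : ∀ g : G, g ≠ 1 → ¬IsOfFinOrder g) {m x : G} [IsCyclic (centralizer ({m} : Set G))]
    (hm : m ≠ 1) (hx : x ∈ normalizer (centralizer ({m} : Set G) : Set G)) :
    x * m * x⁻¹ = m ∨ x * m * x⁻¹ = m⁻¹ := by
  have hmZ : m ∈ centralizer ({m} : Set G) := mem_centralizer_singleton_iff.2 rfl
  obtain ⟨n, hn⟩ := (normalizerMonoidHom _ ⟨x, hx⟩).toMonoidHom.map_cyclic
  obtain ⟨k, hk⟩ := (normalizerMonoidHom _ ⟨x, hx⟩)⁻¹.toMonoidHom.map_cyclic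
  have hxm : x * m * x⁻¹ = m ^ n := by simpa using congrArg Subtype.val (hn ⟨m, hmZ⟩)
  have hxm' : x⁻¹ * m * x = m ^ k := by simpa using congrArg Subtype.val (hk ⟨m, hmZ⟩)
  have hself : m ^ (k * n) = m :=
    calc m ^ (k * n) = (x⁻¹ * m * x) ^ n := by rw [hxm', zpow_mul]
      _ = x⁻¹ * m ^ n * x := by simpa using conj_zpow (a := x⁻¹) (b := m) (i := n)
      _ = m := by rw [← hxm]; group
  have hkn : k * n = 1 := by
    by_contra hne
    exact htf m hm (isOfFinOrder_iff_zpow_eq_one.2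
      ⟨k * n - 1, sub_ne_zero.2 hne, by rw [zpow_sub_one, hself, mul_inv_cancel]⟩)
  rcases Int.eq_one_or_neg_one_of_mul_eq_one (mul_comm k n ▸ hkn) with rfl | rfl
  · exact Or.inl (by simpa using hxm)
  · exact Or.inr (by simpa using hxm)

namespace IsCommTransitive

variable {G : Type*} [Group G]

theorem le_centralizer_of_mem (hct : IsCommTransitive G) {L : Subgroup G} {c h : G}
    (hc : c ≠ 1) (hL : L ≤ centralizer ({c} : Set G)) (hh : h ∈ L) :
    L ≤ centralizer ({h} : Set G) :=
  fun _ hx => mem_centralizer_singleton_iff.2 <|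
    hct _ c _ hc (mem_centralizer_singleton_iff.1 (hL hx))
      (mem_centralizer_singleton_iff.1 (hL hh)).symm

theorem centralizer_eq_of_mem (hct : IsCommTransitive G) {c h : G} (hc : c ≠ 1) (hh : h ≠ 1)
    (hmem : h ∈ centralizer ({c} : Set G)) :
    centralizer ({c} : Set G) = centralizer ({h} : Set G) :=
  le_antisymm (hct.le_centralizer_of_mem hc le_rfl hmem) <|
    hct.le_centralizer_of_mem hh le_rfl
      (mem_centralizer_singleton_iff.2 (mem_centralizer_singleton_iff.1 hmem).symm)

theorem existsUnique_centralizer_ge (hct : IsCommTransitive G) {H : Subgroup G} (hH : H ≠ ⊥)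
    {b : G} (hb : b ≠ 1) (hHb : H ≤ centralizer ({b} : Set G)) :
    ∃! K : Subgroup G, (∃ c : G, c ≠ 1 ∧ K = centralizer ({c} : Set G)) ∧ H ≤ K := by
  obtain ⟨h, hhH, hh⟩ := (bot_or_exists_ne_one H).resolve_left hH
  refine ⟨centralizer {h}, ⟨⟨h, hh, rfl⟩, hct.le_centralizer_of_mem hb hHb hhH⟩, ?_⟩
  rintro _ ⟨⟨c, hc, rfl⟩, hHc⟩
  exact hct.centralizer_eq_of_mem hc hh (hHc hhH)

theorem centralizer_maximal (hct : IsCommTransitive G) (h : G) :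
    ∀ L ∈ famGen (nontrivialCentralizers G) \ {⊥}, centralizer ({h} : Set G) ≤ L →
      centralizer ({h} : Set G) = L := by
  rintro L ⟨hLF, -⟩ hle
  obtain ⟨c, hc, hLc⟩ := mem_famGen_nontrivialCentralizers.1 hLF
  exact le_antisymm hle <|
    hct.le_centralizer_of_mem hc hLc (hle (mem_centralizer_singleton_iff.2 rfl))

theorem eq_centralizer_of_maximal (hct : IsCommTransitive G) {M : Subgroup G}
    (hM : M ∈ famGen (nontrivialCentralizers G) \ {⊥})
    (hmax : ∀ L ∈ famGen (nontrivialCentralizers G) \ {⊥}, M ≤ L → M = L)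
    {m : G} (hmM : m ∈ M) (hm : m ≠ 1) : M = centralizer ({m} : Set G) := by
  obtain ⟨c, hc, hMc⟩ := mem_famGen_nontrivialCentralizers.1 hM.1
  exact hmax _ (centralizer_mem_famGen_diff_bot hm) (hct.le_centralizer_of_mem hc hMc hmM)

theorem conditionM (hct : IsCommTransitive G) :
    conditionM {⊥} (famGen (nontrivialCentralizers G)) := by
  rintro H ⟨hHF, hH⟩
  obtain ⟨c, hc, hHc⟩ := mem_famGen_nontrivialCentralizers.1 hHF
  obtain ⟨h, hhH, hh⟩ := (bot_or_exists_ne_one H).resolve_left hH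
  refine ⟨centralizer {h}, ⟨centralizer_mem_famGen_diff_bot hh,
    hct.le_centralizer_of_mem hc hHc hhH, hct.centralizer_maximal h⟩, ?_⟩
  rintro M ⟨hM, hHM, hmax⟩
  exact hct.eq_centralizer_of_maximal hM hmax (hHM hhH) hh

theorem conditionNM (hct : IsCommTransitive G)
    (hnorm : ∀ m : G, m ≠ 1 → normalizer (centralizer ({m} : Set G) : Set G) = centralizer {m}) :
    conditionNM {⊥} (famGen (nontrivialCentralizers G)) := by
  rintro M hM hmax
  obtain ⟨m, hmM, hm⟩ := (bot_or_exists_ne_one M).resolve_left hM.2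
  rw [hct.eq_centralizer_of_maximal hM hmax hmM hm]
  exact hnorm m hm

theorem commute_of_mem_normalizer_of_isCyclic (hct : IsCommTransitive G)
    (htf : ∀ g : G, g ≠ 1 → ¬IsOfFinOrder g) {m x : G} [IsCyclic (centralizer ({m} : Set G))]
    (hm : m ≠ 1) (hx : x ∈ normalizer (centralizer ({m} : Set G) : Set G)) : Commute x m := by
  rcases conj_eq_self_or_inv_of_mem_normalizer_centralizer htf hm hx with hxm | hxm
  · exact mul_inv_eq_iff_eq_mul.1 hxm
  by_cases hx2 : x * x = 1
  · have hx1 : x = 1 := by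
      by_contra hx1
      exact htf x hx1 (isOfFinOrder_iff_pow_eq_one.2 ⟨2, two_pos, by rw [sq, hx2]⟩)
    rw [hx1]
    exact Commute.one_left m
  have hx2m : Commute (x * x) m := by
    refine mul_inv_eq_iff_eq_mul.1 ?_
    calc x * x * m * (x * x)⁻¹ = x * (x * m * x⁻¹) * x⁻¹ := by group
      _ = x * m⁻¹ * x⁻¹ := by rw [hxm]
      _ = (x * m * x⁻¹)⁻¹ := by group
      _ = m := by rw [hxm, inv_inv]
  exact hct x (x * x) m hx2 ((Commute.refl x).mul_right (Commute.refl x)) hx2m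

end IsCommTransitive

namespace IsMalnormalCollection

variable {π : Type*} [Group π] {I : Type*} {P : I → Subgroup π}

theorem mem_of_conj_mem_s16 (hmal : IsMalnormalCollection P) {i : I} {a x : π} (ha : a ≠ 1)
    (haP : a ∈ P i) (hxa : x * a * x⁻¹ ∈ P i) : x ∈ P i := by
  refine ((hmal i i x).resolve_left fun hbot => ?_).2
  have hmem : x * a * x⁻¹ ∈ (P i).map (MulAut.conj x).toMonoidHom ⊓ P i :=
    ⟨⟨a, haP, rfl⟩, hxa⟩
  rw [hbot, mem_bot, conj_eq_one_iff] at hmem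
  exact ha hmem

theorem conj_mem_of_commute (hmal : IsMalnormalCollection P) {i : I} {b g x : π} (hb : b ≠ 1)
    (hbP : g * b * g⁻¹ ∈ P i) (hx : Commute x b) : g * x * g⁻¹ ∈ P i := by
  refine hmal.mem_of_conj_mem_s16 (by simpa using hb) hbP ?_
  have hconj : g * x * g⁻¹ * (g * b * g⁻¹) * (g * x * g⁻¹)⁻¹ = g * b * g⁻¹ :=
    calc _ = g * (x * b * x⁻¹) * g⁻¹ := by group
      _ = g * b * g⁻¹ := by rw [hx.eq, mul_inv_cancel_right]
  rwa [hconj]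

theorem commute_of_conj_mem (hmal : IsMalnormalCollection P)
    (hab : ∀ i : I, IsMulCommutative (P i)) {i : I} {b g x y : π} (hb : b ≠ 1)
    (hbP : g * b * g⁻¹ ∈ P i) (hx : Commute x b) (hy : Commute y b) : Commute x y :=
  (Commute.conj_iff g).1 <|
    setLike_mul_comm (hmal.conj_mem_of_commute hb hbP hx) (hmal.conj_mem_of_commute hb hbP hy)

theorem isCommTransitive (hmal : IsMalnormalCollection P)
    (hab : ∀ i : I, IsMulCommutative (P i))
    (hcyc : ∀ b : π, (¬ ∃ (i : I) (g : π), g * b * g⁻¹ ∈ P i) →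
      IsCyclic (centralizer ({b} : Set π))) :
    IsCommTransitive π := by
  intro x b y hb hxb hby
  by_cases hconj : ∃ (i : I) (g : π), g * b * g⁻¹ ∈ P i
  · obtain ⟨i, g, hbP⟩ := hconj
    exact hmal.commute_of_conj_mem hab hb hbP hxb hby.symm
  · have := hcyc b hconj
    exact setLike_mul_comm (s := centralizer ({b} : Set π))
      (mem_centralizer_singleton_iff.2 hxb) (mem_centralizer_singleton_iff.2 hby.symm)

theorem commute_of_mem_normalizer (hmal : IsMalnormalCollection P)
    (hab : ∀ i : I, IsMulCommutative (P i)) {i : I} {g m x : π} (hm : m ≠ 1)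
    (hmP : g * m * g⁻¹ ∈ P i) (hx : x ∈ normalizer (centralizer ({m} : Set π) : Set π)) :
    Commute x m := by
  have hxm : Commute (x * m * x⁻¹) m :=
    mem_centralizer_singleton_iff.1 <| (mem_normalizer_iff.1 hx m).1 <|
      mem_centralizer_singleton_iff.2 rfl
  have hxmP : g * x * g⁻¹ * (g * m * g⁻¹) * (g * x * g⁻¹)⁻¹ ∈ P i := by
    have hconj : g * x * g⁻¹ * (g * m * g⁻¹) * (g * x * g⁻¹)⁻¹ = g * (x * m * x⁻¹) * g⁻¹ := by
      group
    rw [hconj]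
    exact hmal.conj_mem_of_commute hm hmP hxm
  have hxP : g * x * g⁻¹ ∈ P i := hmal.mem_of_conj_mem_s16 (by simpa using hm) hmP hxmP
  exact (Commute.conj_iff g).1 (setLike_mul_comm hxP hmP)

theorem normalizer_centralizer_eq (htf : ∀ g : π, g ≠ 1 → ¬IsOfFinOrder g)
    (hmal : IsMalnormalCollection P) (hab : ∀ i : I, IsMulCommutative (P i))
    (hcyc : ∀ b : π, (¬ ∃ (i : I) (g : π), g * b * g⁻¹ ∈ P i) →
      IsCyclic (centralizer ({b} : Set π)))
    {m : π} (hm : m ≠ 1) :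
    normalizer (centralizer ({m} : Set π) : Set π) = centralizer {m} := by
  refine le_antisymm (fun x hx => mem_centralizer_singleton_iff.2 ?_) le_normalizer
  by_cases hconj : ∃ (i : I) (g : π), g * m * g⁻¹ ∈ P i
  · obtain ⟨i, g, hmP⟩ := hconj
    exact hmal.commute_of_mem_normalizer hab hm hmP hx
  · have := hcyc m hconj
    exact (hmal.isCommTransitive hab hcyc).commute_of_mem_normalizer_of_isCyclic htf hm hx

end IsMalnormalCollection

/-- For a group `π` as in the Setup: every nontrivial subgroup `H` contained in some centralizer
`Z_π(b)` with `b ≠ e` is contained in exactly one subgroup of the form `Z_π(c)`, `c ≠ e`;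
consequently, conditions `(M_{TR⊆F⟨Z⟩})` and `(NM_{TR⊆F⟨Z⟩})` hold for `π`, where
`F⟨Z⟩ = F⟨{Z_π(b) | b ∈ π∖{e}}⟩`. -/
theorem conditionM_NM_TR_centralizers {π : Type*} [Group π] {I : Type*} (P : I → Subgroup π)
    (htf : ∀ g : π, g ≠ 1 → ¬IsOfFinOrder g)
    (hmal : IsMalnormalCollection P)
    (hab : ∀ i : I, IsMulCommutative (P i))
    (hcyc : ∀ b : π, (¬ ∃ (i : I) (g : π), g * b * g⁻¹ ∈ P i) →
      IsCyclic (Subgroup.centralizer ({b} : Set π))) :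
    (∀ H : Subgroup π, H ≠ ⊥ →
      (∃ b : π, b ≠ 1 ∧ H ≤ Subgroup.centralizer ({b} : Set π)) →
      ∃! K : Subgroup π,
        (∃ c : π, c ≠ 1 ∧ K = Subgroup.centralizer ({c} : Set π)) ∧ H ≤ K) ∧
    conditionM ({⊥} : Set (Subgroup π))
      (famGen {K | ∃ b : π, b ≠ 1 ∧ K = Subgroup.centralizer ({b} : Set π)}) ∧
    conditionNM ({⊥} : Set (Subgroup π))
      (famGen {K | ∃ b : π, b ≠ 1 ∧ K = Subgroup.centralizer ({b} : Set π)}) := by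
  have hct := hmal.isCommTransitive hab hcyc
  exact ⟨fun _ hH ⟨_, hb, hHb⟩ => hct.existsUnique_centralizer_ge hH hb hHb, hct.conditionM,
    hct.conditionNM fun _ hm => hmal.normalizer_centralizer_eq htf hab hcyc hm⟩
end
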